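/- arXiv:2009.00062 — 6 statements merged into one kernel-verified Lean document; each statement's English description precedes it below -/
import Mathlib

section
/- Let F : [0,1]^n → [0,1]^n be defined by F(φ)_i = f_{y,s}(z_i + Σ_{k≠i} y_{ik} φ_k), where y > 0, all y_{ik} ≥ 0, and Σ_{k≠i} y_{ik} ≤ y for each i. If moreover Σ_{k≠i} y_{ik} < y for each i (strict inequality), then F is a contraction on [0,1]^n with respect to the sup norm, and hence has a unique fixed point. -/
/-!
Clipping to `[0,1]` is 1-Lipschitz, so `f_{y,s}` is `1/y`-Lipschitz. The `i`-th input
`z_i + Σ_{k≠i} y_{ik} φ_k` moves by at most `(Σ_{k≠i} y_{ik}) ‖φ - ψ‖` in the sup norm, hence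
`F` is Lipschitz with constant `max_i (Σ_{k≠i} y_{ik}) / y < 1`, and Banach's fixed point
theorem applies on the complete space `ℝⁿ`; the fixed point lies in `[0,1]ⁿ` because `F` does.
-/

open Finset NNReal

noncomputable def f (y s h : ℝ) : ℝ := max 0 (min 1 ((h - s) / y))

lemma f_mem_Icc (y s h : ℝ) : f y s h ∈ Set.Icc (0 : ℝ) 1 :=
  ⟨le_max_left _ _, max_le zero_le_one (min_le_left _ _)⟩

lemma abs_f_sub_f_le {y : ℝ} (s : ℝ) (hy : 0 < y) (a b : ℝ) :
    |f y s a - f y s b| ≤ |a - b| / y :=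
  calc |f y s a - f y s b|
      ≤ |min 1 ((a - s) / y) - min 1 ((b - s) / y)| := by
        simpa only [f, max_comm (0 : ℝ)] using abs_max_sub_max_le_abs _ _ (0 : ℝ)
    _ ≤ |(a - s) / y - (b - s) / y| := by
        simpa using abs_min_sub_min_le_max 1 ((a - s) / y) 1 ((b - s) / y)
    _ = |a - b| / y := by
        rw [div_sub_div_same, sub_sub_sub_cancel_right, abs_div, abs_of_pos hy]

lemma abs_sum_mul_sub_sum_mul_le {ι : Type*} [Fintype ι] (t : Finset ι) {w : ι → ℝ}
    (hw : ∀ k, 0 ≤ w k) (φ ψ : ι → ℝ) :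
    |∑ k ∈ t, w k * φ k - ∑ k ∈ t, w k * ψ k| ≤ (∑ k ∈ t, w k) * ‖φ - ψ‖ := by
  rw [← sum_sub_distrib, sum_mul]
  refine (abs_sum_le_sum_abs _ _).trans (sum_le_sum fun k _ => ?_)
  rw [← mul_sub, abs_mul, abs_of_nonneg (hw k)]
  exact mul_le_mul_of_nonneg_left (norm_le_pi_norm (φ - ψ) k) (hw k)

lemma exists_nnreal_lt_forall_le {ι : Type*} [Finite ι] {g : ι → ℝ} {c : ℝ} (hc : 0 < c)
    (hg : ∀ i, g i < c) : ∃ K : ℝ≥0, (K : ℝ) < c ∧ ∀ i, g i ≤ K := by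
  have := Fintype.ofFinite ι
  refine ⟨univ.sup fun i => (g i).toNNReal, ?_, fun i => ?_⟩
  · refine Real.lt_toNNReal_iff_coe_lt.1 ((Finset.sup_lt_iff (by simpa using hc)).2 fun i _ => ?_)
    exact (Real.toNNReal_lt_toNNReal_iff hc).2 (hg i)
  · exact (Real.le_coe_toNNReal (g i)).trans
      (NNReal.coe_le_coe.2 (le_sup (f := fun i => (g i).toNNReal) (mem_univ i)))

section EquilibriumMap

variable {ι : Type*} [Fintype ι] [DecidableEq ι]

noncomputable def equilibriumMap (y s : ℝ) (z : ι → ℝ) (Y : ι → ι → ℝ) (φ : ι → ℝ) : ι → ℝ :=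
  fun i => f y s (z i + ∑ k ∈ univ.erase i, Y i k * φ k)

lemma lipschitzWith_equilibriumMap {y : ℝ} (s : ℝ) (hy : 0 < y) (z : ι → ℝ) {Y : ι → ι → ℝ}
    (hY : ∀ i k, 0 ≤ Y i k) {K : ℝ≥0} (hK : ∀ i, (∑ k ∈ univ.erase i, Y i k) / y ≤ K) :
    LipschitzWith K (equilibriumMap y s z Y) := by
  refine LipschitzWith.of_dist_le_mul fun φ ψ => ?_
  rw [dist_eq_norm, dist_eq_norm, pi_norm_le_iff_of_nonneg (by positivity)]
  intro i
  calc |equilibriumMap y s z Y φ i - equilibriumMap y s z Y ψ i|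
      ≤ |∑ k ∈ univ.erase i, Y i k * φ k - ∑ k ∈ univ.erase i, Y i k * ψ k| / y :=
        (abs_f_sub_f_le s hy _ _).trans_eq (by rw [add_sub_add_left_eq_sub])
    _ ≤ (∑ k ∈ univ.erase i, Y i k) * ‖φ - ψ‖ / y := by
        gcongr; exact abs_sum_mul_sub_sum_mul_le _ (hY i) φ ψ
    _ ≤ K * ‖φ - ψ‖ := by
        rw [mul_div_right_comm]; gcongr; exact hK i

end EquilibriumMap

/-- The equilibrium map `F(φ)_i = f_{y,s}(z_i + Σ_{k≠i} y_{ik} φ_k)` on `[0,1]^n`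
is a contraction in the sup norm when `Σ_{k≠i} y_{ik} < y`, and has a unique
fixed point in `[0,1]^n`. -/
theorem stmt_1 {n : ℕ} (y s : ℝ) (hy : 0 < y) (z : Fin n → ℝ) (Y : Fin n → Fin n → ℝ)
    (hYpos : ∀ i k, 0 ≤ Y i k)
    (hsub : ∀ i, ∑ k ∈ Finset.univ.erase i, Y i k < y) :
    ∃ K : ℝ, 0 ≤ K ∧ K < 1 ∧
      (∀ φ ψ : Fin n → ℝ, (∀ k, φ k ∈ Set.Icc (0:ℝ) 1) → (∀ k, ψ k ∈ Set.Icc (0:ℝ) 1) →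
        ‖(fun i => f y s (z i + ∑ k ∈ Finset.univ.erase i, Y i k * φ k)) -
          (fun i => f y s (z i + ∑ k ∈ Finset.univ.erase i, Y i k * ψ k))‖ ≤ K * ‖φ - ψ‖) ∧
      (∃! φ : Fin n → ℝ, (∀ k, φ k ∈ Set.Icc (0:ℝ) 1) ∧
        (∀ i, φ i = f y s (z i + ∑ k ∈ Finset.univ.erase i, Y i k * φ k))) := by
  obtain ⟨K, hK1, hK⟩ := exists_nnreal_lt_forall_le one_pos fun i => (div_lt_one hy).2 (hsub i)
  have hF : ContractingWith K (equilibriumMap y s z Y) :=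
    ⟨by exact_mod_cast hK1, lipschitzWith_equilibriumMap s hy z hYpos hK⟩
  refine ⟨K, K.2, hK1, fun φ ψ _ _ => ?_, ⟨hF.fixedPoint, ⟨fun k => ?_, fun i => ?_⟩, ?_⟩⟩
  · have := hF.dist_le_mul φ ψ
    rwa [dist_eq_norm, dist_eq_norm] at this
  · rw [← hF.fixedPoint_isFixedPt]
    exact f_mem_Icc y s _
  · exact (congrFun hF.fixedPoint_isFixedPt i).symm
  · rintro φ ⟨-, hφ⟩
    exact hF.fixedPoint_unique (funext fun i => (hφ i).symm)
end

section
/- For the ring network in the large-shock large-exposure regime (ε ≥ n(a-s) and y ≥ (n-1)(a-s), ε ≥ y + (a-s)), the vector φ with φ_1 = 0 and φ_i = (i-1)(a-s)/y for i = 2,…,n is a fixed point of the ring propagation map: φ_1 = max(0, min(1, (y φ_n + a - ε - s)/y)) and φ_{i+1} = max(0, min(1, (y φ_i + a - s)/y)) for i = 1,…,n-1. -/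
/-- Ring network, large-shock large-exposure regime: `φ_1 = 0`,
`φ_i = (i-1)(a-s)/y` for `i = 2,…,n` is a fixed point of the ring propagation map. -/
theorem stmt_3 (n : ℕ) (hn : 2 ≤ n) (a s y ε : ℝ) (hs0 : 0 < s) (hsa : s < a)
    (hy : 0 < y) (hyexp : ((n : ℝ) - 1) * (a - s) ≤ y)
    (hεbig : (n : ℝ) * (a - s) ≤ ε) (hεy : y + (a - s) ≤ ε)
    (φ : ℕ → ℝ) (hφ1 : φ 1 = 0)
    (hφi : ∀ i : ℕ, 2 ≤ i → i ≤ n → φ i = ((i : ℝ) - 1) * (a - s) / y) :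
    φ 1 = f y s (a - ε + y * φ n) ∧
    (∀ i : ℕ, 1 ≤ i → i < n → φ (i + 1) = f y s (a + y * φ i)) := by
  have has : 0 < a - s := by linarith
  constructor
  · have hφn : φ n = ((n : ℝ) - 1) * (a - s) / y := hφi n hn le_rfl
    rw [hφ1, hφn, f]
    have hmul : y * (((n : ℝ) - 1) * (a - s) / y) = ((n : ℝ) - 1) * (a - s) := by
      field_simp
    rw [hmul]
    have hnum : a - ε + ((n : ℝ) - 1) * (a - s) - s ≤ 0 := by ring_nf; nlinarith
    have : (a - ε + ((n : ℝ) - 1) * (a - s) - s) / y ≤ 0 :=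
      div_nonpos_of_nonpos_of_nonneg hnum hy.le
    exact (max_eq_left (le_trans (min_le_right _ _) this)).symm
  · intro i h1 hin
    have hφiv : φ i = ((i : ℝ) - 1) * (a - s) / y := by
      rcases eq_or_lt_of_le h1 with h | h
      · rw [← h, hφ1]; norm_num
      · exact hφi i h (le_of_lt hin)
    have hφi1 : φ (i + 1) = ((i : ℝ)) * (a - s) / y := by
      rw [hφi (i + 1) (by omega) (by omega)]
      push_cast; ring_nf
    rw [hφi1, hφiv, f]
    have hmul : y * (((i : ℝ) - 1) * (a - s) / y) = ((i : ℝ) - 1) * (a - s) := by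
      field_simp
    rw [hmul]
    have hnum : a + ((i : ℝ) - 1) * (a - s) - s = (i : ℝ) * (a - s) := by ring
    rw [hnum]
    have hile : (i : ℝ) ≤ (n : ℝ) - 1 := by
      have : (i : ℝ) + 1 ≤ (n : ℝ) := by exact_mod_cast hin
      linarith
    have hle1 : (i : ℝ) * (a - s) / y ≤ 1 := by
      rw [div_le_one hy]
      nlinarith
    have hge0 : 0 ≤ (i : ℝ) * (a - s) / y := by positivity
    rw [min_eq_right hle1, max_eq_right hge0]
end

section
/- In the complete network, if y > (n-1)(a-s) and ε ≥ n(a-s), then φ_s = 0 and φ_ns = (n-1)(a-s)/y solve the equilibrium equations φ_s = f_{y,s}(a - ε + y φ_ns) and φ_ns = f_{y,s}(a + (y/(n-1)) φ_s + y((n-2)/(n-1)) φ_ns). -/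
/-- Complete network, large-shock large-exposure regime: `φ_s = 0`,
`φ_ns = (n-1)(a-s)/y` solve the equilibrium equations. -/
theorem stmt_5 (n : ℕ) (hn : 2 ≤ n) (a s y ε : ℝ) (hs0 : 0 < s) (hsa : s < a)
    (hy : 0 < y) (hyexp : ((n : ℝ) - 1) * (a - s) < y) (hεbig : (n : ℝ) * (a - s) ≤ ε) :
    (0 : ℝ) = f y s (a - ε + y * (((n : ℝ) - 1) * (a - s) / y)) ∧
    ((n : ℝ) - 1) * (a - s) / y =
      f y s (a + (y / ((n : ℝ) - 1)) * 0 +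
        y * (((n : ℝ) - 2) / ((n : ℝ) - 1)) * (((n : ℝ) - 1) * (a - s) / y)) := by
  have hn1 : (1 : ℝ) ≤ (n : ℝ) := by exact_mod_cast Nat.one_le_of_lt hn
  have hn2 : (2 : ℝ) ≤ (n : ℝ) := by exact_mod_cast hn
  have hn1' : (n : ℝ) - 1 ≠ 0 := by linarith
  have hy' : y ≠ 0 := ne_of_gt hy
  constructor
  · unfold f
    rw [mul_div_cancel₀ _ hy']
    have h1 : a - ε + ((n : ℝ) - 1) * (a - s) - s ≤ 0 := by nlinarith
    have h2 : (a - ε + ((n : ℝ) - 1) * (a - s) - s) / y ≤ 0 :=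
      div_nonpos_of_nonpos_of_nonneg h1 hy.le
    rw [max_eq_left]
    exact (min_le_right _ _).trans h2
  · unfold f
    have harg : a + y / ((n : ℝ) - 1) * 0 +
        y * (((n : ℝ) - 2) / ((n : ℝ) - 1)) * (((n : ℝ) - 1) * (a - s) / y)
        = a + ((n : ℝ) - 2) * (a - s) := by
      field_simp
      ring
    rw [harg]
    have h3 : a + ((n : ℝ) - 2) * (a - s) - s = ((n : ℝ) - 1) * (a - s) := by ring
    rw [h3]
    have hpos : 0 ≤ ((n : ℝ) - 1) * (a - s) / y :=
      div_nonneg (by nlinarith) hy.le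
    have hlt : ((n : ℝ) - 1) * (a - s) / y ≤ 1 :=
      (div_le_one hy).mpr hyexp.le
    rw [min_eq_right hlt, max_eq_right hpos]
end

section
/- In the complete network with y ≤ (n-1)(a-s) or ε ≤ n(a-s) (and ε ≥ a - s), the pair φ_ns = 1, φ_s = max(0, 1 - (ε - (a-s))/y) solves the equilibrium equations φ_s = f_{y,s}(a - ε + y φ_ns) and φ_ns = f_{y,s}(a + (y/(n-1)) φ_s + y((n-2)/(n-1)) φ_ns). -/
/-- Complete network, small-shock or low-exposure regime: `φ_ns = 1`,
`φ_s = max(0, 1 - (ε-(a-s))/y)` solve the equilibrium equations. -/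
theorem stmt_6 (n : ℕ) (hn : 2 ≤ n) (a s y ε : ℝ) (hs0 : 0 < s) (hsa : s < a)
    (hy : 0 < y) (hε : a - s ≤ ε)
    (hreg : y ≤ ((n : ℝ) - 1) * (a - s) ∨ ε ≤ (n : ℝ) * (a - s)) :
    max 0 (1 - (ε - (a - s)) / y) = f y s (a - ε + y * 1) ∧
    (1 : ℝ) = f y s (a + (y / ((n : ℝ) - 1)) * max 0 (1 - (ε - (a - s)) / y) +
      y * (((n : ℝ) - 2) / ((n : ℝ) - 1)) * 1) := by
  have hN : (2:ℝ) ≤ (n:ℝ) := by exact_mod_cast hn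
  have hn1 : (0:ℝ) < (n:ℝ) - 1 := by linarith
  set φ := max 0 (1 - (ε - (a - s)) / y) with hφ
  have hφ0 : 0 ≤ φ := le_max_left _ _
  have hφ2 : 1 - (ε - (a - s)) / y ≤ φ := le_max_right _ _
  constructor
  · have h1 : (a - ε + y * 1 - s) / y = 1 - (ε - (a - s)) / y := by
      field_simp; ring
    unfold f
    rw [h1, min_eq_right]
    have : 0 ≤ (ε - (a - s)) / y := div_nonneg (by linarith) hy.le
    linarith
  · unfold f
    have hkey : y / ((n:ℝ) - 1) * (1 - φ) ≤ a - s := by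
      rcases hreg with h | h
      · have h1 : y / ((n:ℝ) - 1) * (1 - φ) ≤ y / ((n:ℝ) - 1) * 1 := by
          apply mul_le_mul_of_nonneg_left (by linarith)
          positivity
        have h2 : y / ((n:ℝ) - 1) ≤ a - s := by
          rw [div_le_iff₀ hn1]; linarith
        linarith
      · have h1 : 1 - φ ≤ (ε - (a - s)) / y := by linarith
        have h2 : y / ((n:ℝ) - 1) * (1 - φ) ≤ y / ((n:ℝ) - 1) * ((ε - (a-s))/y) := by
          apply mul_le_mul_of_nonneg_left h1
          positivity
        have h3 : y / ((n:ℝ) - 1) * ((ε - (a-s))/y) = (ε - (a-s)) / ((n:ℝ) - 1) := by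
          field_simp
        have h4 : (ε - (a-s)) / ((n:ℝ) - 1) ≤ a - s := by
          rw [div_le_iff₀ hn1]; nlinarith
        linarith
    have hid : a + y / ((n:ℝ) - 1) * φ + y * (((n:ℝ) - 2) / ((n:ℝ) - 1)) * 1 - s
        = (a - s) - y / ((n:ℝ) - 1) * (1 - φ) + y := by
      field_simp; ring
    have harg : 1 ≤ (a + y / ((n:ℝ) - 1) * φ + y * (((n:ℝ) - 2) / ((n:ℝ) - 1)) * 1 - s) / y := by
      rw [le_div_iff₀ hy, hid]; linarith
    rw [min_eq_left harg, max_eq_right zero_le_one]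
end

section
/- (Stability region characterization, Proposition 2) Let b ∈ ℝ, ε ≥ 0, λ ∈ [0,1), τ ∈ (0,1), y > 0, and define φ(y,ε) = (1-τ)(1 - ε/y) + b/y. Then the condition (1-λ)·max(0, min(φ(y,ε),1)) + bλ/(τy) ≥ 1 holds if and only if at least one of the following holds: (i) y ≤ bλ/τ; (ii) ε ≤ (b - τy)/(1-τ); (iii) ε ≤ b(λ/τ + 1/(1-τ)) - (y - bλ/τ)(1/((1-τ)(1-λ)) - 1). -/
/-- Stability region characterization (Proposition 2): with
`φ(y,ε) = (1-τ)(1-ε/y) + b/y`, the condition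
`(1-λ) max(0, min(φ(y,ε),1)) + bλ/(τy) ≥ 1` holds iff
`y ≤ bλ/τ`, or `ε ≤ (b-τy)/(1-τ)`, or
`ε ≤ b(λ/τ + 1/(1-τ)) - (y - bλ/τ)(1/((1-τ)(1-λ)) - 1)`. -/
theorem stmt_8 (b ε lam τ y : ℝ) (hb : 0 ≤ b) (hε : 0 ≤ ε)
    (hlam : lam ∈ Set.Ico (0:ℝ) 1) (hτ : τ ∈ Set.Ioo (0:ℝ) 1) (hy : 0 < y) :
    ((1 - lam) * max 0 (min ((1 - τ) * (1 - ε / y) + b / y) 1) + b * lam / (τ * y) ≥ 1 ↔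
      (y ≤ b * lam / τ ∨ ε ≤ (b - τ * y) / (1 - τ) ∨
        ε ≤ b * (lam / τ + 1 / (1 - τ)) -
          (y - b * lam / τ) * (1 / ((1 - τ) * (1 - lam)) - 1))) := by
  obtain ⟨hl0, hl1⟩ := hlam
  obtain ⟨ht0, ht1⟩ := hτ
  have hy' : y ≠ 0 := ne_of_gt hy
  have h1τ : (0:ℝ) < 1 - τ := by linarith
  have h1l : (0:ℝ) < 1 - lam := by linarith
  have hτy : (0:ℝ) < τ * y := by positivity
  set φ : ℝ := (1 - τ) * (1 - ε / y) + b / y with hφ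
  clear_value φ
  have hA : b * lam / (τ * y) ≥ 0 := by positivity
  have hrepr : φ = ((1 - τ) * (y - ε) + b) / y := by
    rw [hφ]; field_simp
  have hi : b * lam / (τ * y) ≥ 1 ↔ y ≤ b * lam / τ := by
    rw [ge_iff_le, le_div_iff₀ hτy, le_div_iff₀ ht0]
    constructor <;> intro h <;> nlinarith
  have hii : φ ≥ 1 ↔ ε ≤ (b - τ * y) / (1 - τ) := by
    rw [hrepr, ge_iff_le, le_div_iff₀ hy, le_div_iff₀ h1τ]
    constructor <;> intro h <;> nlinarith
  have hD : (0:ℝ) < τ * (1 - τ) * (1 - lam) := by positivity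
  have hR : b * (lam / τ + 1 / (1 - τ)) -
          (y - b * lam / τ) * (1 / ((1 - τ) * (1 - lam)) - 1)
      = (y * τ * (1 - τ) * (1 - lam) + b * τ * (1 - lam) - τ * y + b * lam) /
          (τ * (1 - τ) * (1 - lam)) := by
    field_simp; ring
  have hiii : (1 - lam) * φ + b * lam / (τ * y) ≥ 1 ↔
      ε ≤ b * (lam / τ + 1 / (1 - τ)) -
          (y - b * lam / τ) * (1 / ((1 - τ) * (1 - lam)) - 1) := by
    have hcomb : (1 - lam) * (((1 - τ) * (y - ε) + b) / y) + b * lam / (τ * y)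
        = ((1 - lam) * ((1 - τ) * (y - ε) + b) * τ + b * lam) / (τ * y) := by
      field_simp
    rw [hR, le_div_iff₀ hD, hrepr, ge_iff_le, hcomb, le_div_iff₀ hτy]
    constructor <;> intro h <;> nlinarith
  rcases le_or_gt 1 φ with h1 | h1
  · rw [min_eq_right h1, max_eq_right (by norm_num : (0:ℝ) ≤ 1)]
    constructor
    · intro _; exact Or.inr (Or.inl (hii.mp h1))
    · intro _
      have hbτ : τ * y ≤ b := by
        have := hii.mp h1
        rw [le_div_iff₀ h1τ] at this; nlinarith
      have : lam ≤ b * lam / (τ * y) := by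
        rw [le_div_iff₀ hτy]; nlinarith
      linarith
  · rw [min_eq_left (le_of_lt h1)]
    rcases le_or_gt φ 0 with h0 | h0
    · rw [max_eq_left h0, mul_zero, zero_add]
      constructor
      · intro h; exact Or.inl (hi.mp h)
      · rintro (h | h | h)
        · exact hi.mpr h
        · exact absurd (hii.mpr h) (by linarith)
        · have h2 := hiii.mpr h
          have hp : (1 - lam) * φ ≤ 0 := mul_nonpos_iff.mpr (Or.inl ⟨h1l.le, h0⟩)
          linarith
    · rw [max_eq_right (le_of_lt h0)]
      constructor
      · intro h; exact Or.inr (Or.inr (hiii.mp h))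
      · rintro (h | h | h)
        · have h2 := hi.mpr h
          have hp : 0 ≤ (1 - lam) * φ := mul_nonneg h1l.le h0.le
          linarith
        · exact absurd (hii.mpr h) (by linarith)
        · exact hiii.mpr h
end

section
/- With λ_τ^r = 1 - (1-τ)^{n-1} and λ_τ^c = τ(n-1)/(1 + τ(n-2)), for every τ ∈ (0,1) and n ≥ 2 one has λ_τ^r ≥ λ_τ^c, with equality iff n = 2; consequently the ring critical exposure y*_r(τ) = (λ_τ^r/τ)((1-τ)a - s) is at least the complete-network critical exposure y*_c(τ) = (λ_τ^c/τ)((1-τ)a - s) whenever (1-τ)a - s ≥ 0. -/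
/-- Comparison of the ring and complete structural coefficients:
`λ_τ^r = 1-(1-τ)^{n-1} ≥ λ_τ^c = τ(n-1)/(1+τ(n-2))`, with equality iff `n = 2`;
consequently the ring critical exposure dominates the complete-network one when
`(1-τ)a - s ≥ 0`. -/
theorem stmt_9 (n : ℕ) (hn : 2 ≤ n) (τ a s : ℝ) (hτ : τ ∈ Set.Ioo (0:ℝ) 1)
    (hs : 0 < s) (hsa : s < a) :
    (τ * ((n : ℝ) - 1) / (1 + τ * ((n : ℝ) - 2)) ≤ 1 - (1 - τ) ^ (n - 1)) ∧
    ((1 - (1 - τ) ^ (n - 1) = τ * ((n : ℝ) - 1) / (1 + τ * ((n : ℝ) - 2))) ↔ n = 2) ∧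
    ((1 - τ) * a - s ≥ 0 →
      (τ * ((n : ℝ) - 1) / (1 + τ * ((n : ℝ) - 2)) / τ) * ((1 - τ) * a - s) ≤
        ((1 - (1 - τ) ^ (n - 1)) / τ) * ((1 - τ) * a - s)) := by
  obtain ⟨hτ0, hτ1⟩ := hτ
  obtain ⟨m, rfl⟩ : ∃ m, n = m + 2 := ⟨n - 2, by omega⟩
  have h1τ : (0:ℝ) < 1 - τ := by linarith
  have hber : 1 + (m:ℝ) * τ ≤ (1 + τ) ^ m := one_add_mul_le_pow (by linarith) m
  have hbase : (1 - τ) * (1 + τ) ≤ 1 := by nlinarith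
  have hbase0 : (0:ℝ) ≤ (1 - τ) * (1 + τ) := by nlinarith
  have hkey : (1 - τ) ^ m * (1 + τ * (m:ℝ)) ≤ 1 := by
    calc (1 - τ) ^ m * (1 + τ * (m:ℝ)) ≤ (1 - τ) ^ m * (1 + τ) ^ m := by
          apply mul_le_mul_of_nonneg_left (by linarith) (by positivity)
      _ = ((1 - τ) * (1 + τ)) ^ m := (mul_pow _ _ _).symm
      _ ≤ 1 := pow_le_one₀ hbase0 hbase
  have hkey' : m ≠ 0 → (1 - τ) ^ m * (1 + τ * (m:ℝ)) < 1 := by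
    intro hm
    calc (1 - τ) ^ m * (1 + τ * (m:ℝ)) ≤ (1 - τ) ^ m * (1 + τ) ^ m := by
          apply mul_le_mul_of_nonneg_left (by linarith) (by positivity)
      _ = ((1 - τ) * (1 + τ)) ^ m := (mul_pow _ _ _).symm
      _ < 1 := pow_lt_one₀ hbase0 (by nlinarith) hm
  have hd : (0:ℝ) < 1 + τ * ((m:ℝ) + 2 - 2) := by
    have : (0:ℝ) ≤ (m:ℝ) := Nat.cast_nonneg m
    nlinarith
  have hcast : ((m + 2 : ℕ) : ℝ) = (m:ℝ) + 2 := by push_cast; ring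
  have hexp : m + 2 - 1 = m + 1 := rfl
  have hpow : (1 - τ) ^ (m + 1) = (1 - τ) ^ m * (1 - τ) := pow_succ _ _
  have h2 : (1 - τ) ^ (m + 1) * (1 + τ * (m:ℝ)) ≤ 1 - τ := by
    rw [hpow]
    nlinarith [mul_le_mul_of_nonneg_left hkey h1τ.le]
  have hmain : τ * (((m + 2 : ℕ) : ℝ) - 1) / (1 + τ * (((m + 2 : ℕ) : ℝ) - 2)) ≤
      1 - (1 - τ) ^ (m + 2 - 1) := by
    rw [hcast, hexp, div_le_iff₀ hd]
    nlinarith [h2]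
  refine ⟨hmain, ?_, ?_⟩
  · constructor
    · intro heq
      by_contra hne
      have hm : m ≠ 0 := by omega
      have h2' : (1 - τ) ^ (m + 1) * (1 + τ * (m:ℝ)) < 1 - τ := by
        rw [hpow]
        nlinarith [mul_lt_mul_of_pos_left (hkey' hm) h1τ]
      have hstrict : τ * (((m + 2 : ℕ) : ℝ) - 1) / (1 + τ * (((m + 2 : ℕ) : ℝ) - 2)) <
          1 - (1 - τ) ^ (m + 2 - 1) := by
        rw [hcast, hexp, div_lt_iff₀ hd]
        nlinarith [h2']
      rw [heq] at hstrict
      exact lt_irrefl _ hstrict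
    · intro h
      have hm : m = 0 := by omega
      subst hm
      norm_num
  · intro h
    have hdiv : τ * (((m + 2 : ℕ) : ℝ) - 1) / (1 + τ * (((m + 2 : ℕ) : ℝ) - 2)) / τ ≤
        (1 - (1 - τ) ^ (m + 2 - 1)) / τ := by
      gcongr
    exact mul_le_mul_of_nonneg_right hdiv h
end
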